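/- With R and I as above, for integers n, m, n′, m′, the monomials sⁿtᵐ and s^{n′}t^{m′} are congruent modulo I if and only if n + nm + m ≡ n′ + n′m′ + m′ (mod 2). -/

import Mathlib

noncomputable section

abbrev R2 : Type := AddMonoidAlgebra ℤ (ℤ × ℤ)

def mono (n m : ℤ) : R2 := AddMonoidAlgebra.single (n, m) 1

def Igen : Set R2 :=
  {x | ∃ n : ℤ, x = mono n n - mono n 0} ∪
  {x | ∃ n m : ℤ, x = mono n m + mono (-n) (m - n)} ∪
  {x | ∃ n m : ℤ, x = mono n m + mono m n} ∪
  {x | ∃ n m : ℤ, x = mono n m * (1 - mono 0 1) ^ 2}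

def I : AddSubgroup R2 := AddSubgroup.closure Igen

abbrev A2 : Type := AddMonoidAlgebra (ZMod 2) (ZMod 2)

def tA (k : ZMod 2) : A2 := AddMonoidAlgebra.single k 1

def Jf (n m : ℤ) : ZMod 2 := ((n + n * m + m : ℤ) : ZMod 2)

def phi : R2 →ₗ[ℤ] A2 :=
  Finsupp.lsum ℤ (fun p : ℤ × ℤ => LinearMap.toSpanSingleton ℤ A2 (tA (Jf p.1 p.2))) ∘ₗ
    (AddMonoidAlgebra.coeffLinearEquiv ℤ).toLinearMap

def epsA : A2 →ₐ[ZMod 2] ZMod 2 := (AddMonoidAlgebra.lift (ZMod 2) (ZMod 2) (ZMod 2)) 1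

def ev1 : LaurentPolynomial ℤ →ₗ[ℤ] ℤ := Finsupp.lsum ℤ (fun _ => LinearMap.id) ∘ₗ
  (AddMonoidAlgebra.coeffLinearEquiv ℤ).toLinearMap

def lder : LaurentPolynomial ℤ →ₗ[ℤ] LaurentPolynomial ℤ :=
  Finsupp.lsum ℤ (fun n : ℤ =>
    LinearMap.toSpanSingleton ℤ (LaurentPolynomial ℤ) ((n : ℤ) • LaurentPolynomial.T (n - 1))) ∘ₗ
    (AddMonoidAlgebra.coeffLinearEquiv ℤ).toLinearMap

def ev2 : R2 →ₗ[ℤ] ZMod 2 :=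
  Finsupp.lsum ℤ (fun _ : ℤ × ℤ => LinearMap.toSpanSingleton ℤ (ZMod 2) 1) ∘ₗ
    (AddMonoidAlgebra.coeffLinearEquiv ℤ).toLinearMap


/-!
Write `[n, m]` for the class of `sⁿtᵐ` in `R / I`. The relation `sⁿtᵐ(1 - t)² ∈ I` says that
`m ↦ [n, m]` has vanishing second difference, hence is affine; the relation `[n, m] = -[m, n]` then
makes `[n, m]` affine in `n` as well, and with `[n, n] = [n, 0]` this forces
`[n, m] = [0, 0] + (n + nm + m) • d` for some `d` with `2 • d = 0`.
Conversely `sⁿtᵐ ↦ t^(n + nm + m mod 2)` defines an additive map `phi : R → 𝔽₂[ℤ/2]` that kills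
every generator of `I`, so the parity of `n + nm + m` is an invariant of the class.
-/

section Relations

variable {M : Type*} [AddCommGroup M]

theorem eq_add_zsmul_of_sub_eq_sub (g : ℤ → M)
    (hg : ∀ x, g (x + 2) - g (x + 1) = g (x + 1) - g x) (x : ℤ) :
    g x = g 0 + x • (g 1 - g 0) := by
  have hstep : Function.Periodic (fun x => g (x + 1) - g x) 1 := fun x => by
    simpa [add_assoc, one_add_one_eq_two] using hg x
  have hline : Function.Periodic (fun x => g x - x • (g 1 - g 0)) 1 := fun x => by
    have h : g (x + 1) - g x = g 1 - g 0 := by simpa using hstep.int_mul_eq x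
    linear_combination (norm := module) h
  have h := hline.int_mul_eq x
  simp only [mul_one, zero_smul, sub_zero] at h
  linear_combination (norm := module) h

variable {f : ℤ → ℤ → M}

theorem two_zsmul_sub_eq_zero_of_antisymm (hdiag : ∀ n, f n n = f n 0)
    (hanti : ∀ n m, f n m + f m n = 0) : (2 : ℤ) • (f 1 0 - f 0 0) = 0 := by
  have h11 := hanti 1 1
  rw [hdiag 1] at h11
  linear_combination (norm := module) h11 - hanti 0 0

theorem eq_add_zsmul_of_antisymm (hdiag : ∀ n, f n n = f n 0)
    (hanti : ∀ n m, f n m + f m n = 0)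
    (hrec : ∀ n m, f n (m + 2) - f n (m + 1) = f n (m + 1) - f n m) (n m : ℤ) :
    f n m = f 0 0 + (n + n * m + m) • (f 1 0 - f 0 0) := by
  have hneg : ∀ n m, f n m = -f m n := fun n m => eq_neg_of_add_eq_zero_left (hanti n m)
  have haff : ∀ n m, f n m = f n 0 + m • (f n 1 - f n 0) := fun n =>
    eq_add_zsmul_of_sub_eq_sub (f n) (hrec n)
  have htor := two_zsmul_sub_eq_zero_of_antisymm hdiag hanti
  have hq : f 1 1 = f 1 0 := hdiag 1
  have hq2 : f 1 0 + f 1 0 = 0 := hq ▸ hanti 1 1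
  have h01 : f 0 1 = f 1 0 := by rw [hneg 0 1, neg_eq_of_add_eq_zero_left hq2]
  have hrow0 : f 0 m = f 0 0 + m • (f 1 0 - f 0 0) := by rw [haff 0 m, h01]
  have hrow1 : f 1 m = f 1 0 := by rw [haff 1 m, hq, sub_self, smul_zero, add_zero]
  have hcol : f n m = f 0 m + n • (f 1 m - f 0 m) := by
    rw [hneg n m, haff m n, hneg m 0, hneg m 1]
    module
  rw [hcol, hrow1, hrow0]
  linear_combination (norm := module) -(n * m) • htor

theorem eq_of_modEq_of_antisymm (hdiag : ∀ n, f n n = f n 0)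
    (hanti : ∀ n m, f n m + f m n = 0)
    (hrec : ∀ n m, f n (m + 2) - f n (m + 1) = f n (m + 1) - f n m) {n m n' m' : ℤ}
    (h : n + n * m + m ≡ n' + n' * m' + m' [ZMOD 2]) : f n m = f n' m' := by
  obtain ⟨k, hk⟩ := h.dvd
  rw [eq_add_zsmul_of_antisymm hdiag hanti hrec n m,
    eq_add_zsmul_of_antisymm hdiag hanti hrec n' m', eq_add_of_sub_eq' hk]
  linear_combination (norm := module) -k • two_zsmul_sub_eq_zero_of_antisymm hdiag hanti

end Relations

theorem mono_mul_mono (a b c d : ℤ) : mono a b * mono c d = mono (a + c) (b + d) := by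
  simp [mono, AddMonoidAlgebra.single_mul_single]

theorem mono_mul_one_sub_sq (n m : ℤ) :
    mono n m * (1 - mono 0 1) ^ 2 =
      mono n (m + 2) - mono n (m + 1) - (mono n (m + 1) - mono n m) := by
  have h1 : mono n m * mono 0 1 = mono n (m + 1) := by rw [mono_mul_mono, add_zero]
  have h2 : mono n (m + 1) * mono 0 1 = mono n (m + 2) := by
    rw [mono_mul_mono, add_zero, add_assoc, one_add_one_eq_two]
  linear_combination (mono 0 1 - 2) * h1 + h2

theorem mk_mono_diag (n : ℤ) : (mono n n : R2 ⧸ I) = mono n 0 :=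
  QuotientAddGroup.eq_iff_sub_mem.mpr <|
    AddSubgroup.subset_closure <| .inl <| .inl <| .inl ⟨n, rfl⟩

theorem mk_mono_add_mk_mono_swap (n m : ℤ) : (mono n m : R2 ⧸ I) + mono m n = 0 := by
  rw [← QuotientAddGroup.mk_add, QuotientAddGroup.eq_zero_iff]
  exact AddSubgroup.subset_closure <| .inl <| .inr ⟨n, m, rfl⟩

theorem mk_mono_sub_eq_sub (n m : ℤ) :
    (mono n (m + 2) : R2 ⧸ I) - mono n (m + 1) = (mono n (m + 1) : R2 ⧸ I) - mono n m := by
  rw [← sub_eq_zero]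
  simp only [← QuotientAddGroup.mk_sub, ← mono_mul_one_sub_sq, QuotientAddGroup.eq_zero_iff]
  exact AddSubgroup.subset_closure <| .inr ⟨n, m, rfl⟩

theorem phi_mono (n m : ℤ) : phi (mono n m) = tA (Jf n m) := by
  change Finsupp.lsum ℤ (fun p : ℤ × ℤ => LinearMap.toSpanSingleton ℤ A2 (tA (Jf p.1 p.2)))
    (Finsupp.single (n, m) 1) = _
  rw [Finsupp.lsum_single, LinearMap.toSpanSingleton_apply, one_smul]

theorem tA_add_self (a : ZMod 2) : tA a + tA a = 0 := by
  rw [tA, ← AddMonoidAlgebra.single_add, show (1 + 1 : ZMod 2) = 0 from rfl,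
    AddMonoidAlgebra.single_zero]

theorem Jf_diag (n : ℤ) : Jf n n = Jf n 0 := by
  simp only [Jf]
  push_cast
  generalize (n : ZMod 2) = x
  revert x
  decide

theorem Jf_neg_sub (n m : ℤ) : Jf (-n) (m - n) = Jf n m := by
  simp only [Jf]
  push_cast
  generalize (n : ZMod 2) = x
  generalize (m : ZMod 2) = y
  revert x y
  decide

theorem Jf_comm (n m : ℤ) : Jf m n = Jf n m := by
  simp only [Jf]
  push_cast
  ring

theorem Jf_add_two (n m : ℤ) : Jf n (m + 2) = Jf n m := by
  simp only [Jf]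
  push_cast
  generalize (n : ZMod 2) = x
  generalize (m : ZMod 2) = y
  revert x y
  decide

theorem I_le_ker_phi : I ≤ (LinearMap.ker phi).toAddSubgroup := by
  rw [I, AddSubgroup.closure_le]
  rintro x (((⟨n, rfl⟩ | ⟨n, m, rfl⟩) | ⟨n, m, rfl⟩) | ⟨n, m, rfl⟩) <;>
    simp only [SetLike.mem_coe, Submodule.mem_toAddSubgroup, LinearMap.mem_ker]
  · rw [map_sub, phi_mono, phi_mono, Jf_diag, sub_self]
  · rw [map_add, phi_mono, phi_mono, Jf_neg_sub, tA_add_self]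
  · rw [map_add, phi_mono, phi_mono, Jf_comm, tA_add_self]
  · rw [mono_mul_one_sub_sq, map_sub, map_sub, map_sub, phi_mono, phi_mono, phi_mono, Jf_add_two]
    linear_combination (norm := abel) tA_add_self (Jf n m) - tA_add_self (Jf n (m + 1))

theorem Jf_eq_of_sub_mem {n m n' m' : ℤ} (h : mono n m - mono n' m' ∈ I) : Jf n m = Jf n' m' := by
  have h' := I_le_ker_phi h
  rw [Submodule.mem_toAddSubgroup, LinearMap.mem_ker, map_sub, phi_mono, phi_mono,
    sub_eq_zero] at h'
  exact AddMonoidAlgebra.single_left_injective one_ne_zero h'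

theorem stmt9 : ∀ n m n' m' : ℤ,
    mono n m - mono n' m' ∈ I ↔
      (n + n * m + m) ≡ (n' + n' * m' + m') [ZMOD 2] := by
  intro n m n' m'
  refine ⟨fun h => (ZMod.intCast_eq_intCast_iff _ _ 2).mp (Jf_eq_of_sub_mem h), fun h => ?_⟩
  rw [← QuotientAddGroup.eq_iff_sub_mem]
  exact eq_of_modEq_of_antisymm (f := fun n m => (mono n m : R2 ⧸ I))
    mk_mono_diag mk_mono_add_mk_mono_swap mk_mono_sub_eq_sub h
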